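/- Let 1 ≤ q < n be integers and set N = 2^n, K = 2^q, M = 2^{n-q}. Work in ℂ^N with standard basis indexed by pairs (u,v) ∈ Fin K × Fin M; for u ∈ Fin K the block u is {(u,v) : v ∈ Fin M}. Let φ be the uniform superposition (every coordinate 1/√N) and fix a target (t*,t'). Let U flip the sign of the coordinate at (t*,t') and fix all other basis vectors; let the global Grover iterate be G ψ = 2⟨φ,ψ⟩φ − ψ composed after U; let the local Grover iterate be G₁ = D_loc ∘ U where (D_loc ψ)(u,v) = (2/M)·∑_{v'} ψ(u,v') − ψ(u,v); and for real θ, φ₀ let G_g ψ = (1 − e^{iθ})·⟨φ,ψ⟩·φ − ψ composed after the map U^{φ₀} that multiplies the coordinate at (t*,t') by e^{iφ₀} and fixes all other basis vectors. Set λ = arcsin(1/√N), λ' = arcsin(1/√M), and for natural numbers j₁, j₂ define a = sin((2j₁+1)λ)·cos(2j₂λ') + (√(M−1)/√(N−1))·cos((2j₁+1)λ)·sin(2j₂λ'), a' = −sin((2j₁+1)λ)·sin(2j₂λ') + (√(M−1)/√(N−1))·cos((2j₁+1)λ)·cos(2j₂λ'), E' = √(M−1)·a' + (N−M)·cos((2j₁+1)λ)/√(N−1),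 and F' = cos((2j₁+1)λ)/√(N−1). If a ≠ 0, sin(θ/2) ≠ 0, cos(φ₀ + θ/2) = −E'·cos(θ/2)/a, and sin(φ₀ + θ/2) = ((cos θ − 1)·E' + N·F')/(2·a·sin(θ/2)), then every coordinate of G_g(G₁^{j₂}(G^{j₁} φ)) at an index (u,v) with u ≠ t* equals 0; hence measuring the first register of this (unit-norm) state yields t* with probability 1. -/

import Mathlib

/-!
Both Grover iterates preserve the states that are constant on the target, on the rest of the
target block, and on the complement of that block. In orthonormal coordinates on the target and
the uniform superposition of the other `L - 1` basis vectors involved (`L = N` for the global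
iterate, `L = M` for the local one, which fixes the other blocks), each iterate is the rotation
by `2 arcsin (1 / √L)`. Hence after `j₁` global and `j₂` local steps the amplitudes are `a` on
the target, `a' / √(M - 1)` on the rest of its block and `F'` elsewhere. The phase conditions
say exactly that `(1 - e^{iθ}) (e^{iφ₀} a + E') = N F'`, which is the statement that the final
generalized iterate maps the amplitude `F'` outside the target block to `F' - F' = 0`; the real
part `2 (a cos φ₀ + E') = N F'` of this relation, together with the normalisation of the state,
gives total probability one on the target block.
-/

open Real Finset Complex

noncomputable def planeRotation (γ : ℝ) (p : ℝ × ℝ) : ℝ × ℝ :=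
  (p.1 * Real.cos γ + p.2 * Real.sin γ, -(p.1 * Real.sin γ) + p.2 * Real.cos γ)

namespace planeRotation

lemma rotation_rotation (γ δ : ℝ) (p : ℝ × ℝ) :
    planeRotation γ (planeRotation δ p) = planeRotation (δ + γ) p := by
  simp only [planeRotation, Real.cos_add, Real.sin_add, Prod.mk.injEq]
  constructor <;> ring

lemma iterate (γ : ℝ) (n : ℕ) (p : ℝ × ℝ) :
    (planeRotation γ)^[n] p = planeRotation (n * γ) p := by
  induction n with
  | zero => simp [planeRotation]
  | succ n ih =>
    rw [Function.iterate_succ_apply', ih, rotation_rotation, Nat.cast_succ, add_one_mul]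

lemma sin_cos (γ α : ℝ) :
    planeRotation γ (Real.sin α, Real.cos α) = (Real.sin (α + γ), Real.cos (α + γ)) := by
  rw [planeRotation, Real.sin_add, Real.cos_add]
  congr 1
  ring

lemma fst_sq_add_snd_sq (γ : ℝ) (p : ℝ × ℝ) :
    (planeRotation γ p).1 ^ 2 + (planeRotation γ p).2 ^ 2 = p.1 ^ 2 + p.2 ^ 2 := by
  simp only [planeRotation]
  linear_combination (p.1 ^ 2 + p.2 ^ 2) * Real.sin_sq_add_cos_sq γ

end planeRotation

section GroverAngle

variable {L : ℝ}

lemma sin_arcsin_inv_sqrt (hL : 1 ≤ L) : Real.sin (Real.arcsin (1 / √L)) = 1 / √L := by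
  have h1 : 1 ≤ √L := Real.one_le_sqrt.mpr hL
  refine Real.sin_arcsin (by linarith [show 0 ≤ 1 / √L by positivity]) ?_
  rwa [div_le_one (by linarith)]

lemma cos_arcsin_inv_sqrt (hL : 1 ≤ L) :
    Real.cos (Real.arcsin (1 / √L)) = √(L - 1) / √L := by
  have hL0 : 0 < L := by linarith
  rw [Real.cos_arcsin, div_pow, Real.sq_sqrt hL0.le, ← Real.sqrt_div' _ hL0.le]
  congr 1
  field_simp

lemma cos_two_mul_arcsin_inv_sqrt (hL : 1 ≤ L) :
    Real.cos (2 * Real.arcsin (1 / √L)) = 1 - 2 / L := by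
  rw [Real.cos_two_mul_eq_one_sub, sin_arcsin_inv_sqrt hL, div_pow, Real.sq_sqrt (by linarith)]
  ring

lemma sin_two_mul_arcsin_inv_sqrt (hL : 1 ≤ L) :
    Real.sin (2 * Real.arcsin (1 / √L)) = 2 * √(L - 1) / L := by
  rw [Real.sin_two_mul, cos_arcsin_inv_sqrt hL, sin_arcsin_inv_sqrt hL]
  field_simp
  rw [Real.sq_sqrt (by linarith)]

/-- In the coordinates `(x, w)`, where `w / √(L - 1)` is the common amplitude of the `L - 1`
non-target basis vectors, one inversion about the mean after the sign flip of the target is the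
rotation by `2 arcsin (1 / √L)`. -/
lemma groverStep_eq_planeRotation (hL : 1 < L) (p : ℝ × ℝ) :
    2 / L * (-p.1 + (L - 1) * (p.2 / √(L - 1))) + p.1 =
        (planeRotation (2 * Real.arcsin (1 / √L)) p).1 ∧
      2 / L * (-p.1 + (L - 1) * (p.2 / √(L - 1))) - p.2 / √(L - 1) =
        (planeRotation (2 * Real.arcsin (1 / √L)) p).2 / √(L - 1) := by
  have hL1 : 0 < L - 1 := by linarith
  have hsq : √(L - 1) ^ 2 = L - 1 := Real.sq_sqrt hL1.le
  have : √(L - 1) ≠ 0 := by positivity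
  have : L ≠ 0 := by linarith
  simp only [planeRotation, cos_two_mul_arcsin_inv_sqrt hL.le, sin_two_mul_arcsin_inv_sqrt hL.le]
  constructor
  · field_simp
    linear_combination (-2 * p.2) * hsq
  · field_simp
    ring

end GroverAngle

lemma Fintype.sum_ite_eq_else {ι R : Type*} [Fintype ι] [DecidableEq ι] [CommRing R] (a : ι)
    (x y : R) : ∑ i, (if i = a then x else y) = x + (Fintype.card ι - 1) * y := by
  have h : ∀ i, (if i = a then x else y) = (if i = a then x - y else 0) + y := by
    intro i; split_ifs <;> ring
  simp only [h, Finset.sum_add_distrib, Finset.sum_ite_eq', Finset.mem_univ, if_true,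
    Finset.sum_const, Finset.card_univ, nsmul_eq_mul]
  ring

lemma sum_conj_uniform_mul {ι : Type*} [Fintype ι] {φ : ι → ℂ} {L : ℝ} (hL : 0 < L)
    (hφ : ∀ i, φ i = ((1 / √L : ℝ) : ℂ)) (χ : ι → ℂ) (i : ι) :
    (∑ j, (starRingEnd ℂ) (φ j) * χ j) * φ i = (∑ j, χ j) / L := by
  have hsq : ((√L : ℝ) : ℂ) * (√L : ℝ) = L := by exact_mod_cast Real.mul_self_sqrt hL.le
  have : ((√L : ℝ) : ℂ) ≠ 0 := by exact_mod_cast (Real.sqrt_pos.mpr hL).ne'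
  simp only [hφ, Complex.conj_ofReal, ← Finset.mul_sum]
  rw [← hsq]
  push_cast
  field_simp

section BlockState

variable {α β : Type*} [DecidableEq α] [DecidableEq β]

def blockState (s : α) (t : β) (x y z : ℂ) : α × β → ℂ :=
  fun i => if i = (s, t) then x else if i.1 = s then y else z

variable (s : α) (t : β) (x y z : ℂ)

lemma sum_blockState_fiber [Fintype β] (u : α) :
    ∑ v, blockState s t x y z (u, v) =
      if u = s then x + (Fintype.card β - 1) * y else Fintype.card β * z := by
  by_cases hu : u = s
  · subst hu
    simp [blockState, Fintype.sum_ite_eq_else]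
  · simp [blockState, hu]

lemma sum_blockState [Fintype α] [Fintype β] :
    ∑ i, blockState s t x y z i =
      x + (Fintype.card β - 1) * y + (Fintype.card α - 1) * (Fintype.card β * z) := by
  rw [Fintype.sum_prod_type]
  simp only [sum_blockState_fiber, Fintype.sum_ite_eq_else]

lemma sum_norm_sq_blockState_self [Fintype β] :
    ∑ v, ‖blockState s t x y z (s, v)‖ ^ 2 = ‖x‖ ^ 2 + (Fintype.card β - 1) * ‖y‖ ^ 2 := by
  simp only [blockState, Prod.mk.injEq, true_and, if_true]
  rw [← Fintype.sum_ite_eq_else t]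
  exact Finset.sum_congr rfl fun v _ => by split_ifs <;> rfl

lemma const_sub_blockState (w : ℂ) :
    (fun i => w - blockState s t x y z i) = blockState s t (w - x) (w - y) (w - z) := by
  funext i
  simp only [blockState]
  split_ifs <;> rfl

variable {s t}

lemma oracle_blockState {V : (α × β → ℂ) → α × β → ℂ} {c : ℂ}
    (hV : ∀ ψ i, V ψ i = if i = (s, t) then c * ψ i else ψ i) :
    V (blockState s t x y z) = blockState s t (c * x) y z := by
  funext i
  rw [hV]
  simp only [blockState]
  split_ifs <;> simp_all

lemma signFlip_blockState {U : (α × β → ℂ) → α × β → ℂ}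
    (hU : ∀ ψ i, U ψ i = if i = (s, t) then -ψ i else ψ i) :
    U (blockState s t x y z) = blockState s t (-x) y z := by
  rw [oracle_blockState x y z (V := U) (c := -1) fun ψ i => by rw [hU, neg_one_mul], neg_one_mul]

variable (s t)

lemma fiberDiffusion_blockState [Fintype β] {c : ℂ} (hc : c * Fintype.card β = 2) :
    (fun i : α × β => c * ∑ v, blockState s t x y z (i.1, v) - blockState s t x y z i) =
      blockState s t (c * (x + (Fintype.card β - 1) * y) - x)
        (c * (x + (Fintype.card β - 1) * y) - y) z := by
  funext ⟨u, v⟩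
  rw [sum_blockState_fiber]
  by_cases hu : u = s
  · subst hu
    simp only [blockState, Prod.mk.injEq, true_and, if_true]
    split_ifs <;> rfl
  · simp only [blockState, hu, if_false, Prod.mk.injEq, false_and]
    linear_combination z * hc

end BlockState

section GroverIterates

variable {α β : Type*} [Fintype β] [DecidableEq α] [DecidableEq β] (s : α) (t : β)

lemma iterate_localGrover {M : ℕ} (hcard : Fintype.card β = M) (hM : 2 ≤ M)
    {U G₁ : (α × β → ℂ) → α × β → ℂ}
    (hU : ∀ ψ i, U ψ i = if i = (s, t) then -ψ i else ψ i)
    (hG₁ : ∀ ψ u v, G₁ ψ (u, v) = (2 / (M : ℂ)) * (∑ v', U ψ (u, v')) - U ψ (u, v))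
    (j : ℕ) (p : ℝ × ℝ) (z : ℂ) :
    G₁^[j] (blockState s t p.1 (p.2 / √(M - 1) : ℝ) z) =
      blockState s t (planeRotation (j * (2 * Real.arcsin (1 / √M))) p).1
        ((planeRotation (j * (2 * Real.arcsin (1 / √M))) p).2 / √(M - 1) : ℝ) z := by
  have hM1 : (1 : ℝ) < M := by exact_mod_cast hM
  have hMC : (2 / M : ℂ) * Fintype.card β = 2 := by
    rw [hcard, div_mul_cancel₀ _ (by exact_mod_cast (by omega : M ≠ 0))]
  let e : ℝ × ℝ → α × β → ℂ := fun p => blockState s t p.1 (p.2 / √(M - 1) : ℝ) z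
  have hstep : Function.Semiconj e (planeRotation (2 * Real.arcsin (1 / √M))) G₁ := by
    intro p
    obtain ⟨h₁, h₂⟩ := groverStep_eq_planeRotation hM1 p
    have hGe : G₁ (e p) = fun i => 2 / M * ∑ v, U (e p) (i.1, v) - U (e p) i := by
      funext ⟨u, v⟩
      exact hG₁ _ u v
    rw [hGe, signFlip_blockState _ _ _ hU, fiberDiffusion_blockState _ _ _ _ _ hMC, hcard]
    simp only [e, ← h₁, ← h₂]
    congr 1 <;> push_cast <;> ring
  rw [← (hstep.iterate_right j) p, planeRotation.iterate]

variable [Fintype α]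

lemma iterate_globalGrover {N : ℕ} (hcard : Fintype.card α * Fintype.card β = N) (hN : 2 ≤ N)
    {φ : α × β → ℂ} (hφ : ∀ i, φ i = ((1 / √N : ℝ) : ℂ))
    {U G : (α × β → ℂ) → α × β → ℂ}
    (hU : ∀ ψ i, U ψ i = if i = (s, t) then -ψ i else ψ i)
    (hG : ∀ ψ i, G ψ i = 2 * (∑ j, (starRingEnd ℂ) (φ j) * U ψ j) * φ i - U ψ i) (j : ℕ) :
    G^[j] φ = blockState s t (Real.sin ((2 * j + 1) * Real.arcsin (1 / √N)) : ℝ)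
      (Real.cos ((2 * j + 1) * Real.arcsin (1 / √N)) / √(N - 1) : ℝ)
      (Real.cos ((2 * j + 1) * Real.arcsin (1 / √N)) / √(N - 1) : ℝ) := by
  have hN1 : (1 : ℝ) < N := by exact_mod_cast hN
  have hcardC : (N : ℂ) = Fintype.card α * Fintype.card β := by exact_mod_cast hcard.symm
  let e : ℝ × ℝ → α × β → ℂ := fun p =>
    blockState s t p.1 (p.2 / √(N - 1) : ℝ) (p.2 / √(N - 1) : ℝ)
  have hstep : Function.Semiconj e (planeRotation (2 * Real.arcsin (1 / √N))) G := by
    intro p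
    obtain ⟨h₁, h₂⟩ := groverStep_eq_planeRotation hN1 p
    have hGe : G (e p) = fun i => 2 * ((∑ j, U (e p) j) / N) - U (e p) i := by
      funext i
      rw [hG, mul_assoc, sum_conj_uniform_mul (by positivity) hφ]
      push_cast
      rfl
    rw [hGe, signFlip_blockState _ _ _ hU, sum_blockState, const_sub_blockState]
    simp only [e, ← h₁, ← h₂]
    congr 1 <;> push_cast <;> rw [hcardC] <;> ring
  have hφe : φ = e (Real.sin (Real.arcsin (1 / √N)), Real.cos (Real.arcsin (1 / √N))) := by
    have hsin : Real.sin (Real.arcsin (1 / √N)) = 1 / √N := sin_arcsin_inv_sqrt hN1.le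
    have hcos : Real.cos (Real.arcsin (1 / √N)) / √(N - 1) = 1 / √N := by
      have : √((N : ℝ) - 1) ≠ 0 := (Real.sqrt_pos.mpr (by linarith)).ne'
      rw [cos_arcsin_inv_sqrt hN1.le]
      field_simp
    funext i
    simp only [e, hsin, hcos, hφ, blockState, ite_self]
  have hangle : Real.arcsin (1 / √N) + j * (2 * Real.arcsin (1 / √N)) =
      (2 * j + 1) * Real.arcsin (1 / √N) := by ring
  rw [hφe, ← (hstep.iterate_right j) _, planeRotation.iterate, planeRotation.sin_cos, hangle]

lemma partialSearch_state {N M : ℕ} (hcardN : Fintype.card α * Fintype.card β = N)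
    (hcardM : Fintype.card β = M) (hN : 2 ≤ N) (hM : 2 ≤ M)
    {φ : α × β → ℂ} (hφ : ∀ i, φ i = ((1 / √N : ℝ) : ℂ))
    {U G G₁ : (α × β → ℂ) → α × β → ℂ}
    (hU : ∀ ψ i, U ψ i = if i = (s, t) then -ψ i else ψ i)
    (hG : ∀ ψ i, G ψ i = 2 * (∑ j, (starRingEnd ℂ) (φ j) * U ψ j) * φ i - U ψ i)
    (hG₁ : ∀ ψ u v, G₁ ψ (u, v) = (2 / (M : ℂ)) * (∑ v', U ψ (u, v')) - U ψ (u, v))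
    (j₁ j₂ : ℕ) :
    let X := (2 * j₁ + 1) * Real.arcsin (1 / √N)
    let p := planeRotation (2 * j₂ * Real.arcsin (1 / √M))
      (Real.sin X, √(M - 1) / √(N - 1) * Real.cos X)
    G₁^[j₂] (G^[j₁] φ) =
      blockState s t p.1 (p.2 / √(M - 1) : ℝ) (Real.cos X / √(N - 1) : ℝ) := by
  intro X p
  have hM1 : (1 : ℝ) < M := by exact_mod_cast hM
  have : √((M : ℝ) - 1) ≠ 0 := (Real.sqrt_pos.mpr (by linarith)).ne'
  have hstart : (√(M - 1) / √(N - 1) * Real.cos X) / √(M - 1) = Real.cos X / √(N - 1) := by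
    field_simp
  rw [iterate_globalGrover s t hcardN hN hφ hU hG, ← hstart,
    iterate_localGrover s t hcardM hM hU hG₁ j₂ (_, _), hstart,
    show (j₂ : ℝ) * (2 * Real.arcsin (1 / √M)) = 2 * j₂ * Real.arcsin (1 / √M) by ring]

lemma generalizedGrover_blockState {N : ℕ} (hN : 0 < N) {φ : α × β → ℂ}
    (hφ : ∀ i, φ i = ((1 / √N : ℝ) : ℂ)) {c d : ℂ} {V Gg : (α × β → ℂ) → α × β → ℂ}
    (hV : ∀ ψ i, V ψ i = if i = (s, t) then c * ψ i else ψ i)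
    (hGg : ∀ ψ i, Gg ψ i = d * (∑ j, (starRingEnd ℂ) (φ j) * V ψ j) * φ i - V ψ i)
    (x y z : ℂ)
    (hz : d * (c * x + (Fintype.card β - 1) * y + (Fintype.card α - 1) * (Fintype.card β * z))
      = N * z) :
    Gg (blockState s t x y z) = blockState s t (z - c * x) (z - y) 0 := by
  have hNC : (N : ℂ) ≠ 0 := by exact_mod_cast hN.ne'
  have hGz : Gg (blockState s t x y z) = fun i => z - V (blockState s t x y z) i := by
    funext i
    rw [hGg, mul_assoc, sum_conj_uniform_mul (by positivity) hφ, oracle_blockState _ _ _ hV,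
      sum_blockState, ← mul_div_assoc, hz]
    push_cast
    field_simp
  rw [hGz, oracle_blockState _ _ _ hV, const_sub_blockState, sub_self]

lemma generalizedGrover_partialSearch {N M : ℕ} (hcardN : Fintype.card α * Fintype.card β = N)
    (hcardM : Fintype.card β = M) (hN : 0 < N) (hM : 2 ≤ M)
    {φ : α × β → ℂ} (hφ : ∀ i, φ i = ((1 / √N : ℝ) : ℂ)) {θ φ₀ : ℝ}
    {V Gg : (α × β → ℂ) → α × β → ℂ}
    (hV : ∀ ψ i, V ψ i = if i = (s, t) then Complex.exp (Complex.I * φ₀) * ψ i else ψ i)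
    (hGg : ∀ ψ i, Gg ψ i =
      (1 - Complex.exp (Complex.I * θ)) * (∑ j, (starRingEnd ℂ) (φ j) * V ψ j) * φ i - V ψ i)
    {a a' F : ℝ}
    (hphase : (1 - Complex.exp (Complex.I * θ)) *
      (Complex.exp (Complex.I * φ₀) * a + (√(M - 1) * a' + (N - M) * F : ℝ)) = (N * F : ℝ)) :
    Gg (blockState s t a (a' / √(M - 1) : ℝ) F) =
      blockState s t (F - Complex.exp (Complex.I * φ₀) * a) (F - (a' / √(M - 1) : ℝ)) 0 := by
  refine generalizedGrover_blockState s t hN hφ hV hGg _ _ _ ?_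
  have hy : ((M : ℝ) - 1) * (a' / √(M - 1)) = √(M - 1) * a' := by
    have hM1 : (0 : ℝ) ≤ M - 1 := by linarith [show (2 : ℝ) ≤ M by exact_mod_cast hM]
    nth_rw 1 [← Real.mul_self_sqrt hM1]
    field_simp
  have hyC := congrArg (fun r : ℝ => (r : ℂ)) hy
  have hNC : (Fintype.card α : ℂ) * Fintype.card β = N := by exact_mod_cast hcardN
  rw [hcardM] at hNC ⊢
  push_cast at hphase hyC ⊢
  linear_combination hphase + (1 - Complex.exp (Complex.I * θ)) * hyC
    + (1 - Complex.exp (Complex.I * θ)) * F * hNC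

end GroverIterates

section PhaseMatching

lemma cos_eq_one_sub_two_mul_sin_half_sq (θ : ℝ) :
    Real.cos θ = 1 - 2 * Real.sin (θ / 2) ^ 2 := by
  rw [← Real.cos_two_mul_eq_one_sub, mul_div_cancel₀ θ two_ne_zero]

variable {a E c θ φ₀ : ℝ}

lemma phaseMatching_re_im (ha : a ≠ 0) (hs : Real.sin (θ / 2) ≠ 0)
    (hcos : Real.cos (φ₀ + θ / 2) = -E * Real.cos (θ / 2) / a)
    (hsin : Real.sin (φ₀ + θ / 2) = ((Real.cos θ - 1) * E + c) / (2 * a * Real.sin (θ / 2))) :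
    2 * (a * Real.cos φ₀ + E) = c ∧
      2 * Real.sin (θ / 2) * (a * Real.sin φ₀) = c * Real.cos (θ / 2) := by
  have hφ₀ : φ₀ = (φ₀ + θ / 2) - θ / 2 := by ring
  rw [hφ₀, Real.cos_sub, Real.sin_sub, hcos, hsin, cos_eq_one_sub_two_mul_sin_half_sq θ]
  constructor
  · field_simp
    linear_combination (-2 * E) * Real.sin_sq_add_cos_sq (θ / 2)
  · field_simp
    ring

lemma one_sub_exp_mul_eq_of_re_im (hre : 2 * (a * Real.cos φ₀ + E) = c)
    (him : 2 * Real.sin (θ / 2) * (a * Real.sin φ₀) = c * Real.cos (θ / 2)) :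
    (1 - Complex.exp (Complex.I * θ)) * (Complex.exp (Complex.I * φ₀) * a + E) = c := by
  have hsin : Real.sin θ = 2 * Real.sin (θ / 2) * Real.cos (θ / 2) := by
    rw [← Real.sin_two_mul, mul_div_cancel₀ θ two_ne_zero]
  rw [mul_comm Complex.I, mul_comm Complex.I, Complex.exp_mul_I, Complex.exp_mul_I,
    ← Complex.ofReal_cos, ← Complex.ofReal_sin, ← Complex.ofReal_cos, ← Complex.ofReal_sin]
  apply Complex.ext <;>
    simp only [Complex.mul_re, Complex.mul_im, Complex.sub_re, Complex.sub_im, Complex.add_re,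
      Complex.add_im, Complex.one_re, Complex.one_im, Complex.ofReal_re, Complex.ofReal_im,
      Complex.I_re, Complex.I_im] <;>
    rw [cos_eq_one_sub_two_mul_sin_half_sq θ, hsin]
  · linear_combination Real.sin (θ / 2) ^ 2 * hre + Real.cos (θ / 2) * him
      + c * Real.sin_sq_add_cos_sq (θ / 2)
  · linear_combination Real.sin (θ / 2) * him - Real.sin (θ / 2) * Real.cos (θ / 2) * hre

end PhaseMatching

lemma partialSearch_normSq {N M : ℝ} (hN : 1 < N) (hM : 1 ≤ M) (X γ : ℝ) :
    (planeRotation γ (Real.sin X, √(M - 1) / √(N - 1) * Real.cos X)).1 ^ 2 +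
      (planeRotation γ (Real.sin X, √(M - 1) / √(N - 1) * Real.cos X)).2 ^ 2 +
        (N - M) * (Real.cos X / √(N - 1)) ^ 2 = 1 := by
  have : √(N - 1) ≠ 0 := (Real.sqrt_pos.mpr (by linarith)).ne'
  rw [planeRotation.fst_sq_add_snd_sq]
  field_simp
  rw [Real.sq_sqrt (by linarith), Real.sq_sqrt (by linarith)]
  linear_combination (N - 1) * Real.sin_sq_add_cos_sq X

lemma norm_sq_add_norm_sq_eq_one {a a' F E φ₀ N M : ℝ} (hM : 1 < M)
    (hnorm : a ^ 2 + a' ^ 2 + (N - M) * F ^ 2 = 1) (hE : E = √(M - 1) * a' + (N - M) * F)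
    (hre : 2 * (a * Real.cos φ₀ + E) = N * F) :
    ‖(F : ℂ) - Complex.exp (Complex.I * φ₀) * a‖ ^ 2 +
      (M - 1) * ‖(F : ℂ) - (a' / √(M - 1) : ℝ)‖ ^ 2 = 1 := by
  have hM1 : √(M - 1) ^ 2 = M - 1 := Real.sq_sqrt (by linarith)
  have ha' : a' = √(M - 1) * (a' / √(M - 1)) := by
    field_simp [(Real.sqrt_pos.mpr (by linarith) : 0 < √(M - 1)).ne']
  generalize a' / √(M - 1) = y at ha'
  subst ha'
  rw [mul_comm Complex.I, Complex.exp_mul_I, ← Complex.ofReal_cos, ← Complex.ofReal_sin,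
    ← Complex.ofReal_sub, Complex.norm_real, Complex.sq_norm, Complex.normSq_apply]
  simp only [Complex.sub_re, Complex.sub_im, Complex.mul_re, Complex.mul_im, Complex.add_re,
    Complex.add_im, Complex.ofReal_re, Complex.ofReal_im, Complex.I_re, Complex.I_im,
    Real.norm_eq_abs, sq_abs]
  linear_combination a ^ 2 * Real.sin_sq_add_cos_sq φ₀ + hnorm - F * (hre - 2 * hE)
    + (2 * F * y - y ^ 2) * hM1

theorem stmt_8_general (n q : ℕ) (hqn : q < n)
    (N K M : ℕ) (hN : N = 2 ^ n) (hK : K = 2 ^ q) (hM : M = 2 ^ (n - q))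
    -- the uniform superposition
    (φ : Fin K × Fin M → ℂ) (hφ : ∀ i, φ i = ((1 / Real.sqrt N : ℝ) : ℂ))
    -- the target
    (tstar : Fin K) (t' : Fin M)
    -- the sign-flip oracle
    (U : (Fin K × Fin M → ℂ) → (Fin K × Fin M → ℂ))
    (hU : ∀ ψ i, U ψ i = if i = (tstar, t') then -ψ i else ψ i)
    -- the global Grover iterate  G ψ = 2⟨φ, U ψ⟩φ − U ψ
    (G : (Fin K × Fin M → ℂ) → (Fin K × Fin M → ℂ))
    (hG : ∀ ψ i, G ψ i = 2 * (∑ j, (starRingEnd ℂ) (φ j) * U ψ j) * φ i - U ψ i)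
    -- the local Grover iterate  G₁ = D_loc ∘ U
    (G₁ : (Fin K × Fin M → ℂ) → (Fin K × Fin M → ℂ))
    (hG₁ : ∀ ψ u v, G₁ ψ (u, v) = (2 / (M : ℂ)) * (∑ v' : Fin M, U ψ (u, v')) - U ψ (u, v))
    -- phases of the final generalized Grover operator
    (θ φ₀ : ℝ)
    -- the phase oracle U^{φ₀}
    (Uφ₀ : (Fin K × Fin M → ℂ) → (Fin K × Fin M → ℂ))
    (hUφ₀ : ∀ ψ i, Uφ₀ ψ i =
      if i = (tstar, t') then Complex.exp (Complex.I * φ₀) * ψ i else ψ i)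
    -- the generalized global Grover iterate  G_g ψ = (1 − e^{iθ})⟨φ, U^{φ₀}ψ⟩φ − U^{φ₀}ψ
    (Gg : (Fin K × Fin M → ℂ) → (Fin K × Fin M → ℂ))
    (hGg : ∀ ψ i, Gg ψ i =
      (1 - Complex.exp (Complex.I * θ)) * (∑ j, (starRingEnd ℂ) (φ j) * Uφ₀ ψ j) * φ i -
        Uφ₀ ψ i)
    -- the angles
    (lam lam' : ℝ)
    (hlam : lam = Real.arcsin (1 / Real.sqrt N))
    (hlam' : lam' = Real.arcsin (1 / Real.sqrt M))
    (j₁ j₂ : ℕ)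
    -- the amplitudes and derived quantities
    (a a' E' F' : ℝ)
    (ha : a = Real.sin ((2 * j₁ + 1) * lam) * Real.cos (2 * j₂ * lam') +
        Real.sqrt ((M : ℝ) - 1) / Real.sqrt ((N : ℝ) - 1) *
          Real.cos ((2 * j₁ + 1) * lam) * Real.sin (2 * j₂ * lam'))
    (ha' : a' = -(Real.sin ((2 * j₁ + 1) * lam) * Real.sin (2 * j₂ * lam')) +
        Real.sqrt ((M : ℝ) - 1) / Real.sqrt ((N : ℝ) - 1) *
          Real.cos ((2 * j₁ + 1) * lam) * Real.cos (2 * j₂ * lam'))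
    (hE' : E' = Real.sqrt ((M : ℝ) - 1) * a' +
        ((N : ℝ) - M) * Real.cos ((2 * j₁ + 1) * lam) / Real.sqrt ((N : ℝ) - 1))
    (hF' : F' = Real.cos ((2 * j₁ + 1) * lam) / Real.sqrt ((N : ℝ) - 1))
    -- the exactness conditions on the phases
    (ha0 : a ≠ 0) (hs0 : Real.sin (θ / 2) ≠ 0)
    (hcos : Real.cos (φ₀ + θ / 2) = -E' * Real.cos (θ / 2) / a)
    (hsin : Real.sin (φ₀ + θ / 2) =
      ((Real.cos θ - 1) * E' + N * F') / (2 * a * Real.sin (θ / 2))) :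
    (∀ (u : Fin K) (v : Fin M), u ≠ tstar → Gg (G₁^[j₂] (G^[j₁] φ)) (u, v) = 0) ∧
    ∑ v : Fin M, ‖Gg (G₁^[j₂] (G^[j₁] φ)) (tstar, v)‖ ^ 2 = 1 := by
  have hKM : K * M = N := by rw [hN, hK, hM, ← pow_add]; congr 1; omega
  have hM2 : 2 ≤ M := hM ▸ Nat.le_self_pow (by omega) 2
  have hN2 : 2 ≤ N := hKM ▸ hM2.trans (Nat.le_mul_of_pos_left M (hK ▸ by positivity))
  subst hlam hlam'
  have hrot : (a, a') = planeRotation (2 * j₂ * Real.arcsin (1 / √M))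
      (Real.sin ((2 * j₁ + 1) * Real.arcsin (1 / √N)),
        √(M - 1) / √(N - 1) * Real.cos ((2 * j₁ + 1) * Real.arcsin (1 / √N))) := by
    rw [ha, ha']
    rfl
  have hstate : G₁^[j₂] (G^[j₁] φ) = blockState tstar t' a (a' / √(M - 1) : ℝ) F' := by
    rw [partialSearch_state tstar t' (by simp [hKM]) (Fintype.card_fin M) hN2 hM2 hφ hU hG hG₁,
      ← hrot, hF']
  have hE : E' = √(M - 1) * a' + (N - M) * F' := by rw [hE', hF', mul_div_assoc]
  obtain ⟨hre, him⟩ := phaseMatching_re_im ha0 hs0 hcos hsin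
  have hphase := one_sub_exp_mul_eq_of_re_im hre him
  rw [hE] at hphase
  have hnorm := partialSearch_normSq (N := N) (M := M) (by exact_mod_cast hN2)
    (by exact_mod_cast one_le_two.trans hM2) ((2 * j₁ + 1) * Real.arcsin (1 / √N))
    (2 * j₂ * Real.arcsin (1 / √M))
  rw [← hrot, ← hF'] at hnorm
  rw [hstate, generalizedGrover_partialSearch tstar t' (by simp [hKM]) (Fintype.card_fin M)
    (by omega) hM2 hφ hUφ₀ hGg hphase]
  refine ⟨fun u v hu => by simp [blockState, hu], ?_⟩
  rw [sum_norm_sq_blockState_self, Fintype.card_fin]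
  exact norm_sq_add_norm_sq_eq_one (by exact_mod_cast hM2) hnorm hE hre

/-- Theorem 1 of the paper: the exact quantum partial search algorithm outputs the first
q bits of the unique marked item with probability 1 when the phases θ, φ₀ of the final
generalized Grover operator satisfy the stated conditions. -/
theorem stmt_8 (n q : ℕ) (hq : 1 ≤ q) (hqn : q < n)
    (N K M : ℕ) (hN : N = 2 ^ n) (hK : K = 2 ^ q) (hM : M = 2 ^ (n - q))
    -- the uniform superposition
    (φ : Fin K × Fin M → ℂ) (hφ : ∀ i, φ i = ((1 / Real.sqrt N : ℝ) : ℂ))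
    -- the target
    (tstar : Fin K) (t' : Fin M)
    -- the sign-flip oracle
    (U : (Fin K × Fin M → ℂ) → (Fin K × Fin M → ℂ))
    (hU : ∀ ψ i, U ψ i = if i = (tstar, t') then -ψ i else ψ i)
    -- the global Grover iterate  G ψ = 2⟨φ, U ψ⟩φ − U ψ
    (G : (Fin K × Fin M → ℂ) → (Fin K × Fin M → ℂ))
    (hG : ∀ ψ i, G ψ i = 2 * (∑ j, (starRingEnd ℂ) (φ j) * U ψ j) * φ i - U ψ i)
    -- the local Grover iterate  G₁ = D_loc ∘ U
    (G₁ : (Fin K × Fin M → ℂ) → (Fin K × Fin M → ℂ))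
    (hG₁ : ∀ ψ u v, G₁ ψ (u, v) = (2 / (M : ℂ)) * (∑ v' : Fin M, U ψ (u, v')) - U ψ (u, v))
    -- phases of the final generalized Grover operator
    (θ φ₀ : ℝ)
    -- the phase oracle U^{φ₀}
    (Uφ₀ : (Fin K × Fin M → ℂ) → (Fin K × Fin M → ℂ))
    (hUφ₀ : ∀ ψ i, Uφ₀ ψ i =
      if i = (tstar, t') then Complex.exp (Complex.I * φ₀) * ψ i else ψ i)
    -- the generalized global Grover iterate  G_g ψ = (1 − e^{iθ})⟨φ, U^{φ₀}ψ⟩φ − U^{φ₀}ψ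
    (Gg : (Fin K × Fin M → ℂ) → (Fin K × Fin M → ℂ))
    (hGg : ∀ ψ i, Gg ψ i =
      (1 - Complex.exp (Complex.I * θ)) * (∑ j, (starRingEnd ℂ) (φ j) * Uφ₀ ψ j) * φ i -
        Uφ₀ ψ i)
    -- the angles
    (lam lam' : ℝ)
    (hlam : lam = Real.arcsin (1 / Real.sqrt N))
    (hlam' : lam' = Real.arcsin (1 / Real.sqrt M))
    (j₁ j₂ : ℕ)
    -- the amplitudes and derived quantities
    (a a' E' F' : ℝ)
    (ha : a = Real.sin ((2 * j₁ + 1) * lam) * Real.cos (2 * j₂ * lam') +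
        Real.sqrt ((M : ℝ) - 1) / Real.sqrt ((N : ℝ) - 1) *
          Real.cos ((2 * j₁ + 1) * lam) * Real.sin (2 * j₂ * lam'))
    (ha' : a' = -(Real.sin ((2 * j₁ + 1) * lam) * Real.sin (2 * j₂ * lam')) +
        Real.sqrt ((M : ℝ) - 1) / Real.sqrt ((N : ℝ) - 1) *
          Real.cos ((2 * j₁ + 1) * lam) * Real.cos (2 * j₂ * lam'))
    (hE' : E' = Real.sqrt ((M : ℝ) - 1) * a' +
        ((N : ℝ) - M) * Real.cos ((2 * j₁ + 1) * lam) / Real.sqrt ((N : ℝ) - 1))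
    (hF' : F' = Real.cos ((2 * j₁ + 1) * lam) / Real.sqrt ((N : ℝ) - 1))
    -- the exactness conditions on the phases
    (ha0 : a ≠ 0) (hs0 : Real.sin (θ / 2) ≠ 0)
    (hcos : Real.cos (φ₀ + θ / 2) = -E' * Real.cos (θ / 2) / a)
    (hsin : Real.sin (φ₀ + θ / 2) =
      ((Real.cos θ - 1) * E' + N * F') / (2 * a * Real.sin (θ / 2))) :
    (∀ (u : Fin K) (v : Fin M), u ≠ tstar → Gg (G₁^[j₂] (G^[j₁] φ)) (u, v) = 0) ∧
    ∑ v : Fin M, ‖Gg (G₁^[j₂] (G^[j₁] φ)) (tstar, v)‖ ^ 2 = 1 :=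
  stmt_8_general n q hqn N K M hN hK hM φ hφ tstar t' U hU G hG G₁ hG₁ θ φ₀ Uφ₀ hUφ₀ Gg hGg lam lam'
    hlam hlam' j₁ j₂ a a' E' F' ha ha' hE' hF' ha0 hs0 hcos hsin
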